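/- Let A be a Banach algebra, regarded as a subalgebra of A** via the canonical embedding. (1) If Z̃₁ℓ(A**) = A, then A is a right ideal in (A**, first Arens product). (2) If Z̃₁ʳ(A**) = A, then A is a left ideal in (A**, first Arens product). (3) If Z̃₁ℓ(A**) = Z̃₁ʳ(A**) = A, then A is a two-sided ideal in A**. -/

import Mathlib

open NormedSpace Filter Topology

noncomputable section

/-- The Arens adjoint of a bounded bilinear map `m : X × Y → Z`:
`⟨adjB m z' x, y⟩ = ⟨z', m x y⟩`. -/
def adjB {X Y Z : Type*} [NormedAddCommGroup X] [NormedSpace ℂ X]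
    [NormedAddCommGroup Y] [NormedSpace ℂ Y] [NormedAddCommGroup Z] [NormedSpace ℂ Z]
    (m : X →L[ℂ] Y →L[ℂ] Z) : StrongDual ℂ Z →L[ℂ] X →L[ℂ] StrongDual ℂ Y :=
  ((ContinuousLinearMap.compL ℂ X (Y →L[ℂ] Z) (Y →L[ℂ] ℂ)).flip m).comp
    (ContinuousLinearMap.compL ℂ Y Z ℂ)

instance complexIsTopologicalAddGroup : IsTopologicalAddGroup ℂ := inferInstance

variable (A : Type*) [NonUnitalNormedRing A] [NormedSpace ℂ A]
  [SMulCommClass ℂ A A] [IsScalarTower ℂ A A] [CompleteSpace A]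

/-- The first Arens product on the bidual `A**`, obtained by the usual three-step
construction: `(a'·a)(b) = a'(ab)`, `(a''·a')(a) = a''(a'·a)`, `(a''b'')(a') = a''(b''·a')`. -/
def arens : StrongDual ℂ (StrongDual ℂ A) →L[ℂ] StrongDual ℂ (StrongDual ℂ A) →L[ℂ] StrongDual ℂ (StrongDual ℂ A) :=
  adjB (adjB (adjB (ContinuousLinearMap.mul ℂ A)))

/-- The left weak topological center `Z̃₁ℓ(A**)`:
those `a''` for which `b'' ↦ a''b''` is weak*-to-weak continuous on `A**`. -/
def wkCenterL : Set (StrongDual ℂ (StrongDual ℂ A)) :=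
  {a'' | Continuous fun b'' : WeakDual ℂ (StrongDual ℂ A) =>
      (arens A a'' b'' : WeakSpace ℂ (StrongDual ℂ (StrongDual ℂ A)))}

/-- The right weak topological center `Z̃₁ʳ(A**)`:
those `a''` for which `b'' ↦ b''a''` is weak*-to-weak continuous on `A**`. -/
def wkCenterR : Set (StrongDual ℂ (StrongDual ℂ A)) :=
  {a'' | Continuous fun b'' : WeakDual ℂ (StrongDual ℂ A) =>
      (arens A b'' a'' : WeakSpace ℂ (StrongDual ℂ (StrongDual ℂ A)))}

/-- The topological center `Z₁(A**)`:
those `a''` for which `b'' ↦ a''b''` is weak*-to-weak* continuous on `A**`. -/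
def topCenterL : Set (StrongDual ℂ (StrongDual ℂ A)) :=
  {a'' | Continuous fun b'' : WeakDual ℂ (StrongDual ℂ A) =>
      (arens A a'' b'' : WeakDual ℂ (StrongDual ℂ A))}

/-!
The canonical image `J(A)` is weak*-dense in `A**` (Goldstine): a weak* neighbourhood of `x`
constrains only finitely many functionals, and on their finite-dimensional span `x` agrees with
some `J a`. If `J a` lies in the left weak topological center, then `b'' ↦ J a · b''` is continuous
on `A**` with its weak* topology and maps `J(A)` into the closed set `J(A)`, because
`J a · J b = J (a b)`; by density it maps all of `A**` into `J(A)`. The right center is symmetric.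
-/

section Goldstine

variable {𝕜 E : Type*} [NontriviallyNormedField 𝕜] [NormedAddCommGroup E] [NormedSpace 𝕜 E]

theorem exists_apply_eq_of_finiteDimensional (V : Submodule 𝕜 (StrongDual 𝕜 E))
    [FiniteDimensional 𝕜 V] (x : StrongDual 𝕜 (StrongDual 𝕜 E)) :
    ∃ a : E, ∀ v ∈ V, v a = x v := by
  let L : E →ₗ[𝕜] V →ₗ[𝕜] 𝕜 := (topDualPairing 𝕜 E ∘ₗ V.subtype).flip
  let K : V →ₗ[𝕜] 𝕜 := (x : StrongDual 𝕜 E →ₗ[𝕜] 𝕜) ∘ₗ V.subtype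
  have hker : ⨅ a, LinearMap.ker (L a) ≤ LinearMap.ker K := by
    intro v hv
    simp only [Submodule.mem_iInf, LinearMap.mem_ker] at hv
    have hv0 : v = 0 := Subtype.ext (ContinuousLinearMap.ext hv)
    simp [hv0]
  obtain ⟨a, ha⟩ : K ∈ LinearMap.range L := by
    have : K ∈ Submodule.span 𝕜 (Set.range L) :=
      FiniteDimensional.mem_span_of_iInf_ker_le_ker (𝕜 := 𝕜) (E := V) hker
    rwa [← LinearMap.coe_range, Submodule.span_eq] at this
  exact ⟨a, fun v hv => LinearMap.congr_fun ha ⟨v, hv⟩⟩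

variable (𝕜 E) in
theorem denseRange_inclusionInDoubleDualWeak : DenseRange (inclusionInDoubleDualWeak 𝕜 E) := by
  intro x
  have hind : IsInducing fun (v : WeakDual 𝕜 (StrongDual 𝕜 E)) (y : StrongDual 𝕜 E) => v y :=
    ⟨rfl⟩
  rw [hind.closure_eq_preimage_closure_image, Set.mem_preimage, mem_closure_iff_nhds]
  intro U hU
  rw [nhds_pi, Filter.mem_pi] at hU
  obtain ⟨I, hI, W, hW, hWU⟩ := hU
  have : FiniteDimensional 𝕜 (Submodule.span 𝕜 I) := FiniteDimensional.span_of_finite 𝕜 hI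
  obtain ⟨a, ha⟩ := exists_apply_eq_of_finiteDimensional (Submodule.span 𝕜 I) x
  refine ⟨_, hWU fun y hy => ?_, Set.mem_image_of_mem _ (Set.mem_range_self a)⟩
  convert mem_of_mem_nhds (hW y) using 1
  exact ha y (Submodule.subset_span hy)

end Goldstine

theorem isClosed_range_inclusionInDoubleDual (𝕜 E : Type*) [RCLike 𝕜] [NormedAddCommGroup E]
    [NormedSpace 𝕜 E] [CompleteSpace E] : IsClosed (Set.range (inclusionInDoubleDual 𝕜 E)) := by
  have hJ : Isometry (inclusionInDoubleDual 𝕜 E) := (inclusionInDoubleDualLi 𝕜).isometry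
  exact hJ.isClosedEmbedding.isClosed_range

theorem arens_inclusionInDoubleDual {B : Type*} [NonUnitalNormedRing B] [NormedSpace ℂ B]
    [SMulCommClass ℂ B B] [IsScalarTower ℂ B B] (a b : B) :
    arens B (inclusionInDoubleDual ℂ B a) (inclusionInDoubleDual ℂ B b) =
      inclusionInDoubleDual ℂ B (a * b) :=
  rfl

section WeakCenters

variable {A}

theorem arens_mem_range_of_mem_wkCenterL {a : A} (ha : inclusionInDoubleDual ℂ A a ∈ wkCenterL A)
    (b'' : StrongDual ℂ (StrongDual ℂ A)) :
    arens A (inclusionInDoubleDual ℂ A a) b'' ∈ Set.range (inclusionInDoubleDual ℂ A) :=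
  (denseRange_inclusionInDoubleDualWeak ℂ A).induction_on b''
    ((isClosed_range_inclusionInDoubleDual ℂ A).preimage ha)
    fun (b : A) => ⟨a * b, (arens_inclusionInDoubleDual a b).symm⟩

theorem arens_mem_range_of_mem_wkCenterR {a : A} (ha : inclusionInDoubleDual ℂ A a ∈ wkCenterR A)
    (b'' : StrongDual ℂ (StrongDual ℂ A)) :
    arens A b'' (inclusionInDoubleDual ℂ A a) ∈ Set.range (inclusionInDoubleDual ℂ A) :=
  (denseRange_inclusionInDoubleDualWeak ℂ A).induction_on b''
    ((isClosed_range_inclusionInDoubleDual ℂ A).preimage ha)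
    fun (b : A) => ⟨b * a, (arens_inclusionInDoubleDual b a).symm⟩

end WeakCenters

/-- with `A` regarded as a subalgebra of `A**` via the canonical embedding:
(1) if `Z̃₁ℓ(A**) = A` then `A` is a right ideal of `(A**, first Arens product)`;
(2) if `Z̃₁ʳ(A**) = A` then `A` is a left ideal;
(3) if both centers equal `A` then `A` is a two-sided ideal. -/
theorem stmt5 :
    (wkCenterL A = Set.range (inclusionInDoubleDual ℂ A) →
      ∀ x ∈ Set.range (inclusionInDoubleDual ℂ A), ∀ b'' : StrongDual ℂ (StrongDual ℂ A),
        arens A x b'' ∈ Set.range (inclusionInDoubleDual ℂ A)) ∧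
    (wkCenterR A = Set.range (inclusionInDoubleDual ℂ A) →
      ∀ x ∈ Set.range (inclusionInDoubleDual ℂ A), ∀ b'' : StrongDual ℂ (StrongDual ℂ A),
        arens A b'' x ∈ Set.range (inclusionInDoubleDual ℂ A)) ∧
    (wkCenterL A = Set.range (inclusionInDoubleDual ℂ A) →
      wkCenterR A = Set.range (inclusionInDoubleDual ℂ A) →
      ∀ x ∈ Set.range (inclusionInDoubleDual ℂ A), ∀ b'' : StrongDual ℂ (StrongDual ℂ A),
        arens A x b'' ∈ Set.range (inclusionInDoubleDual ℂ A) ∧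
        arens A b'' x ∈ Set.range (inclusionInDoubleDual ℂ A)) := by
  have right_ideal (hL : wkCenterL A = Set.range (inclusionInDoubleDual ℂ A)) :
      ∀ x ∈ Set.range (inclusionInDoubleDual ℂ A), ∀ b'' : StrongDual ℂ (StrongDual ℂ A),
        arens A x b'' ∈ Set.range (inclusionInDoubleDual ℂ A) := by
    rintro - ⟨a, rfl⟩
    exact arens_mem_range_of_mem_wkCenterL (hL ▸ Set.mem_range_self a)
  have left_ideal (hR : wkCenterR A = Set.range (inclusionInDoubleDual ℂ A)) :
      ∀ x ∈ Set.range (inclusionInDoubleDual ℂ A), ∀ b'' : StrongDual ℂ (StrongDual ℂ A),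
        arens A b'' x ∈ Set.range (inclusionInDoubleDual ℂ A) := by
    rintro - ⟨a, rfl⟩
    exact arens_mem_range_of_mem_wkCenterR (hR ▸ Set.mem_range_self a)
  exact ⟨right_ideal, left_ideal, fun hL hR x hx b'' =>
    ⟨right_ideal hL x hx b'', left_ideal hR x hx b''⟩⟩

end
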